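/- Suppose the data matrix 𝐗 = [X₊ᵀ, −Xᵀ, −Uᵀ]ᵀ ∈ ℝ^{(2n+m)×T} satisfies [I_n A* B*]𝐗 = [I_n A* B*]Δ for some (A*,B*) ∈ ℝ^{n×n}×ℝ^{n×m} and some Δ ∈ 𝒟_str, and define Σ_str := { (A,B) ∈ ℝ^{n×n}×ℝ^{n×m} : ∃ Δ′ ∈ 𝒟_str with [I_n A B]𝐗 = [I_n A B]Δ′ }. If there exist Φ ∈ S^{(2n+m)+T}, α₁,…,α_J ≥ 0, P ≻ 0 ∈ S^n, L ∈ ℝ^{m×n}, and β > 0 such that diag(I_{2n+m},U) Φ diag(I_{2n+m},U)ᵀ − Σ_{j=1}^J α_j · diag(E_j,U_j) Φ_j diag(E_j,U_j)ᵀ ⪰ 0 and ℳ(P,L,β) − diag(N(Φ),0_n) ⪰ 0, then, with K := LP^{-1}, P − (A+BK)P(A+BK)ᵀ ≻ 0 for every (A,B) ∈ Σ_str; in particular, the data are informative for quadratic stabilization with respect to Σ_str. -/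

import Mathlib

open Matrix

noncomputable section

/-- Moore–Penrose pseudoinverse of a real square matrix, defined via classical choice
(the Moore–Penrose inverse exists and is unique for real matrices). -/
def pinv {k : Type*} [Fintype k] (A : Matrix k k ℝ) : Matrix k k ℝ := by
  classical
  exact if h : ∃ B : Matrix k k ℝ,
      A * B * A = A ∧ B * A * B = B ∧ (A * B)ᵀ = A * B ∧ (B * A)ᵀ = B * A
    then h.choose else 0

/-- Positive semidefinite square root of a real matrix (junk value `0` if not PSD). -/
def msqrt {k : Type*} [Fintype k] [DecidableEq k] (A : Matrix k k ℝ) : Matrix k k ℝ := by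
  classical
  exact if h : A.PosSemidef then
    h.1.eigenvectorUnitary.1 * diagonal (fun i => Real.sqrt (h.1.eigenvalues i)) *
      (star h.1.eigenvectorUnitary : Matrix k k ℝ) else 0

/-- `Z_{q,r}(N) = { Z : [I; Z]ᵀ N [I; Z] ⪰ 0 }`. -/
def ZSet {q r : Type*} [Fintype q] [Fintype r] [DecidableEq q]
    (N : Matrix (q ⊕ r) (q ⊕ r) ℝ) : Set (Matrix r q ℝ) :=
  {Z | ((fromRows (1 : Matrix q q ℝ) Z)ᵀ * N * fromRows (1 : Matrix q q ℝ) Z).PosSemidef}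

/-- `Z⁺_{q,r}(N) = { Z : [I; Z]ᵀ N [I; Z] ≻ 0 }`. -/
def ZSetP {q r : Type*} [Fintype q] [Fintype r] [DecidableEq q]
    (N : Matrix (q ⊕ r) (q ⊕ r) ℝ) : Set (Matrix r q ℝ) :=
  {Z | ((fromRows (1 : Matrix q q ℝ) Z)ᵀ * N * fromRows (1 : Matrix q q ℝ) Z).PosDef}

/-- `Π_{q,r}`: symmetric matrices `N` with `N₂₂ ⪯ 0`, `ker N₂₂ ⊆ ker N₁₂` and
`N₁₁ - N₁₂ N₂₂† N₁₂ᵀ ⪰ 0`. -/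
def PiSet (q r : Type*) [Fintype q] [Fintype r] : Set (Matrix (q ⊕ r) (q ⊕ r) ℝ) :=
  {N | N.IsSymm ∧ (-(N.toBlocks₂₂)).PosSemidef ∧
      (∀ x : r → ℝ, N.toBlocks₂₂ *ᵥ x = 0 → N.toBlocks₁₂ *ᵥ x = 0) ∧
      (N.toBlocks₁₁ - N.toBlocks₁₂ * pinv N.toBlocks₂₂ * (N.toBlocks₁₂)ᵀ).PosSemidef}

/-- Row index type of the stacked data matrix `[X₊ᵀ, -Xᵀ, -Uᵀ]ᵀ` (`2n+m` rows). -/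
abbrev SRows (n m : ℕ) := Fin n ⊕ (Fin n ⊕ Fin m)

/-- `[I_n A B]`. -/
def sysRow {n m : ℕ} (A : Matrix (Fin n) (Fin n) ℝ) (B : Matrix (Fin n) (Fin m) ℝ) :
    Matrix (Fin n) (SRows n m) ℝ :=
  fromCols (1 : Matrix (Fin n) (Fin n) ℝ) (fromCols A B)

/-- `𝐗 = [X₊ᵀ, -Xᵀ, -Uᵀ]ᵀ`. -/
def bigX {n m T : ℕ} (Xp X : Matrix (Fin n) (Fin T) ℝ) (U : Matrix (Fin m) (Fin T) ℝ) :
    Matrix (SRows n m) (Fin T) ℝ :=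
  fromRows Xp (fromRows (-X) (-U))

/-- The data-perturbation set `𝒟 = { EΔ̂ : Δ̂ᵀ ∈ Z(Φ̂) }`. -/
def Dset {n m T nh : ℕ} (E : Matrix (SRows n m) (Fin nh) ℝ)
    (Φ : Matrix (Fin nh ⊕ Fin T) (Fin nh ⊕ Fin T) ℝ) :
    Set (Matrix (SRows n m) (Fin T) ℝ) :=
  {Δ | ∃ Δh : Matrix (Fin nh) (Fin T) ℝ, Δhᵀ ∈ ZSet Φ ∧ Δ = E * Δh}

/-- `Σ`: systems consistent with the data. -/
def SigmaSet {n m T nh : ℕ} (Xp X : Matrix (Fin n) (Fin T) ℝ) (U : Matrix (Fin m) (Fin T) ℝ)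
    (E : Matrix (SRows n m) (Fin nh) ℝ)
    (Φ : Matrix (Fin nh ⊕ Fin T) (Fin nh ⊕ Fin T) ℝ) :
    Set (Matrix (Fin n) (Fin n) ℝ × Matrix (Fin n) (Fin m) ℝ) :=
  {AB | ∃ Δ' ∈ Dset E Φ, sysRow AB.1 AB.2 * bigX Xp X U = sysRow AB.1 AB.2 * Δ'}

/-- `N = [E 𝐗] Φ̂ [E 𝐗]ᵀ`. -/
def Nmat {n m T nh : ℕ} (Xp X : Matrix (Fin n) (Fin T) ℝ) (U : Matrix (Fin m) (Fin T) ℝ)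
    (E : Matrix (SRows n m) (Fin nh) ℝ)
    (Φ : Matrix (Fin nh ⊕ Fin T) (Fin nh ⊕ Fin T) ℝ) :
    Matrix (SRows n m) (SRows n m) ℝ :=
  fromCols E (bigX Xp X U) * Φ * (fromCols E (bigX Xp X U))ᵀ

/-- `[I_n; 0]` used in the image condition `im E ⊇ im [I_n; 0]`. -/
def iota0 (n m : ℕ) : Matrix (SRows n m) (Fin n) ℝ :=
  fromRows (1 : Matrix (Fin n) (Fin n) ℝ) (0 : Matrix (Fin n ⊕ Fin m) (Fin n) ℝ)

/-- `ℳ(P,L,β)` with block rows/columns of sizes `(n,n,m,n)`. -/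
def Mcal {n m : ℕ} (P : Matrix (Fin n) (Fin n) ℝ) (L : Matrix (Fin m) (Fin n) ℝ) (β : ℝ) :
    Matrix (SRows n m ⊕ Fin n) (SRows n m ⊕ Fin n) ℝ :=
  fromBlocks
    (fromBlocks (P - β • (1 : Matrix (Fin n) (Fin n) ℝ)) 0 0 (fromBlocks (-P) (-Lᵀ) (-L) 0))
    (fromRows (0 : Matrix (Fin n) (Fin n) ℝ) (fromRows (0 : Matrix (Fin n) (Fin n) ℝ) L))
    (fromCols (0 : Matrix (Fin n) (Fin n) ℝ) (fromCols (0 : Matrix (Fin n) (Fin n) ℝ) Lᵀ))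
    P

/-- `diag(N, 0_n)` : the `(3n+m)×(3n+m)` matrix with `N` in the upper-left block. -/
def dN {n m : ℕ} (N : Matrix (SRows n m) (SRows n m) ℝ) :
    Matrix (SRows n m ⊕ Fin n) (SRows n m ⊕ Fin n) ℝ :=
  fromBlocks N 0 0 0

/-- Data informativity for quadratic stabilization. -/
def InfQStab {n m T nh : ℕ} (Xp X : Matrix (Fin n) (Fin T) ℝ) (U : Matrix (Fin m) (Fin T) ℝ)
    (E : Matrix (SRows n m) (Fin nh) ℝ)
    (Φ : Matrix (Fin nh ⊕ Fin T) (Fin nh ⊕ Fin T) ℝ) : Prop :=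
  ∃ (P : Matrix (Fin n) (Fin n) ℝ) (K : Matrix (Fin m) (Fin n) ℝ), P.PosDef ∧
    ∀ AB ∈ SigmaSet Xp X U E Φ,
      (P - (AB.1 + AB.2 * K) * P * (AB.1 + AB.2 * K)ᵀ).PosDef

/-- Selector matrix `U_j = [0; I_{T_j}; 0]` placing the `j`-th block inside the
stacked index `Σ_k T_k`. -/
def Usel {J : ℕ} (TT : Fin J → ℕ) (j : Fin J) :
    Matrix ((k : Fin J) × Fin (TT k)) (Fin (TT j)) ℝ :=
  Matrix.of fun i t => if i = ⟨j, t⟩ then 1 else 0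

/-- `U = Σ_j U_j F_j`. -/
def Umat {J T : ℕ} (TT : Fin J → ℕ) (F : (j : Fin J) → Matrix (Fin (TT j)) (Fin T) ℝ) :
    Matrix ((k : Fin J) × Fin (TT k)) (Fin T) ℝ :=
  ∑ j, Usel TT j * F j

/-- `N(Φ) = [I_{2n+m} 𝐗] Φ [I_{2n+m} 𝐗]ᵀ`. -/
def NPhi {n m T : ℕ} (Xd : Matrix (SRows n m) (Fin T) ℝ)
    (Φ : Matrix (SRows n m ⊕ Fin T) (SRows n m ⊕ Fin T) ℝ) :
    Matrix (SRows n m) (SRows n m) ℝ :=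
  fromCols (1 : Matrix (SRows n m) (SRows n m) ℝ) Xd * Φ *
    (fromCols (1 : Matrix (SRows n m) (SRows n m) ℝ) Xd)ᵀ

/-- The outer-approximation LMI. -/
def Cond1 {n m T J : ℕ} (nn TT : Fin J → ℕ)
    (E : (j : Fin J) → Matrix (SRows n m) (Fin (nn j)) ℝ)
    (F : (j : Fin J) → Matrix (Fin (TT j)) (Fin T) ℝ)
    (Φs : (j : Fin J) → Matrix (Fin (nn j) ⊕ Fin (TT j)) (Fin (nn j) ⊕ Fin (TT j)) ℝ)
    (Φ : Matrix (SRows n m ⊕ Fin T) (SRows n m ⊕ Fin T) ℝ) (αs : Fin J → ℝ) : Prop :=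
  (fromBlocks (1 : Matrix (SRows n m) (SRows n m) ℝ) 0 0 (Umat TT F) * Φ *
      (fromBlocks (1 : Matrix (SRows n m) (SRows n m) ℝ) 0 0 (Umat TT F))ᵀ -
    ∑ j, αs j • (fromBlocks (E j) 0 0 (Usel TT j) * Φs j *
      (fromBlocks (E j) 0 0 (Usel TT j))ᵀ)).PosSemidef

/-- The structured perturbation set `𝒟_str` (rows indexed by `2n+m`). -/
def DstrSetR {n m T J : ℕ} (nn TT : Fin J → ℕ)
    (E : (j : Fin J) → Matrix (SRows n m) (Fin (nn j)) ℝ)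
    (F : (j : Fin J) → Matrix (Fin (TT j)) (Fin T) ℝ)
    (Φs : (j : Fin J) → Matrix (Fin (nn j) ⊕ Fin (TT j)) (Fin (nn j) ⊕ Fin (TT j)) ℝ) :
    Set (Matrix (SRows n m) (Fin T) ℝ) :=
  {Δ | ∃ Δs : (j : Fin J) → Matrix (Fin (nn j)) (Fin (TT j)) ℝ,
      (∀ j, (Δs j)ᵀ ∈ ZSet (Φs j)) ∧ Δ = ∑ j, E j * Δs j * F j}

/-- `Σ_str`: systems consistent with the data under structured perturbation. -/
def SigmaStr {n m T J : ℕ} (nn TT : Fin J → ℕ)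
    (E : (j : Fin J) → Matrix (SRows n m) (Fin (nn j)) ℝ)
    (F : (j : Fin J) → Matrix (Fin (TT j)) (Fin T) ℝ)
    (Φs : (j : Fin J) → Matrix (Fin (nn j) ⊕ Fin (TT j)) (Fin (nn j) ⊕ Fin (TT j)) ℝ)
    (Xp X : Matrix (Fin n) (Fin T) ℝ) (U : Matrix (Fin m) (Fin T) ℝ) :
    Set (Matrix (Fin n) (Fin n) ℝ × Matrix (Fin n) (Fin m) ℝ) :=
  {AB | ∃ Δ' ∈ DstrSetR nn TT E F Φs,
      sysRow AB.1 AB.2 * bigX Xp X U = sysRow AB.1 AB.2 * Δ'}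


lemma quadl {p q : Type*} [Fintype p] [Fintype q] (A : Matrix p q ℝ) (B : Matrix q q ℝ)
    (x : p → ℝ) : x ⬝ᵥ (A * B * Aᵀ) *ᵥ x = (Aᵀ *ᵥ x) ⬝ᵥ B *ᵥ (Aᵀ *ᵥ x) := by
  rw [← mulVec_mulVec, ← mulVec_mulVec, dotProduct_mulVec, ← mulVec_transpose]

lemma quadr {p q : Type*} [Fintype p] [Fintype q] (A : Matrix p q ℝ) (B : Matrix p p ℝ)
    (x : q → ℝ) : x ⬝ᵥ (Aᵀ * B * A) *ᵥ x = (A *ᵥ x) ⬝ᵥ B *ᵥ (A *ᵥ x) := by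
  have := quadl Aᵀ B x
  rwa [transpose_transpose] at this

lemma dot_symm {p : Type*} [Fintype p] (P : Matrix p p ℝ) (hs : Pᵀ = P) (a b : p → ℝ) :
    a ⬝ᵥ P *ᵥ b = b ⬝ᵥ P *ᵥ a := by
  rw [dotProduct_mulVec, ← mulVec_transpose, hs, dotProduct_comm]

lemma sum_mulVec' {ι p q : Type*} [Fintype q] (s : Finset ι) (M : ι → Matrix p q ℝ)
    (w : q → ℝ) : (∑ j ∈ s, M j) *ᵥ w = ∑ j ∈ s, M j *ᵥ w := by
  ext t
  simp [Matrix.mulVec, dotProduct, Finset.sum_apply, Matrix.sum_apply, Finset.sum_mul]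
  rw [Finset.sum_comm]

lemma dot_sum' {ι p : Type*} [Fintype p] (s : Finset ι) (v : p → ℝ) (x : ι → p → ℝ) :
    v ⬝ᵥ (∑ j ∈ s, x j) = ∑ j ∈ s, v ⬝ᵥ x j := by
  simp [dotProduct, Finset.sum_apply, Finset.mul_sum]
  rw [Finset.sum_comm]
lemma usel_transpose_mulVec {J : ℕ} (TT : Fin J → ℕ) (j : Fin J)
    (w : ((k : Fin J) × Fin (TT k)) → ℝ) :
    (Usel TT j)ᵀ *ᵥ w = fun t => w ⟨j, t⟩ := by
  funext t
  simp only [Matrix.mulVec, dotProduct, transpose_apply, Usel, Matrix.of_apply,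
    ite_mul, one_mul, zero_mul]
  rw [Finset.sum_ite_eq' Finset.univ (⟨j, t⟩ : (k : Fin J) × Fin (TT k)) w]
  simp

lemma step1 {n m T J : ℕ} (nn TT : Fin J → ℕ)
    (E : (j : Fin J) → Matrix (SRows n m) (Fin (nn j)) ℝ)
    (F : (j : Fin J) → Matrix (Fin (TT j)) (Fin T) ℝ)
    (Φs : (j : Fin J) → Matrix (Fin (nn j) ⊕ Fin (TT j)) (Fin (nn j) ⊕ Fin (TT j)) ℝ)
    (Φ : Matrix (SRows n m ⊕ Fin T) (SRows n m ⊕ Fin T) ℝ)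
    (αs : Fin J → ℝ) (hαs : ∀ j, 0 ≤ αs j)
    (hc1 : Cond1 nn TT E F Φs Φ αs)
    (Δs : (j : Fin J) → Matrix (Fin (nn j)) (Fin (TT j)) ℝ)
    (hΔ : ∀ j, (Δs j)ᵀ ∈ ZSet (Φs j)) (ξ : SRows n m → ℝ) :
    0 ≤ (Sum.elim ξ ((∑ j, E j * Δs j * F j)ᵀ *ᵥ ξ)) ⬝ᵥ
      Φ *ᵥ (Sum.elim ξ ((∑ j, E j * Δs j * F j)ᵀ *ᵥ ξ)) := by
  classical
  set w : ((k : Fin J) × Fin (TT k)) → ℝ :=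
    fun i => ((Δs i.1)ᵀ *ᵥ ((E i.1)ᵀ *ᵥ ξ)) i.2 with hw
  set v : (SRows n m ⊕ ((k : Fin J) × Fin (TT k))) → ℝ := Sum.elim ξ w with hv
  have hsel : ∀ j, (Usel TT j)ᵀ *ᵥ w = (Δs j)ᵀ *ᵥ ((E j)ᵀ *ᵥ ξ) := by
    intro j; rw [usel_transpose_mulVec]
  have hUm : (Umat TT F)ᵀ *ᵥ w = (∑ j, E j * Δs j * F j)ᵀ *ᵥ ξ := by
    rw [Umat, transpose_sum, sum_mulVec', transpose_sum, sum_mulVec']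
    refine Finset.sum_congr rfl fun j _ => ?_
    rw [transpose_mul, ← mulVec_mulVec, hsel, transpose_mul, transpose_mul,
      ← mulVec_mulVec, ← mulVec_mulVec]
  have h1 := Matrix.PosSemidef.dotProduct_mulVec_nonneg hc1 v
  rw [star_trivial, sub_mulVec, dotProduct_sub] at h1
  -- big term
  have hbig : v ⬝ᵥ (fromBlocks (1 : Matrix (SRows n m) (SRows n m) ℝ) 0 0 (Umat TT F) * Φ *
      (fromBlocks (1 : Matrix (SRows n m) (SRows n m) ℝ) 0 0 (Umat TT F))ᵀ) *ᵥ v =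
      (Sum.elim ξ ((∑ j, E j * Δs j * F j)ᵀ *ᵥ ξ)) ⬝ᵥ
        Φ *ᵥ (Sum.elim ξ ((∑ j, E j * Δs j * F j)ᵀ *ᵥ ξ)) := by
    rw [quadl]
    congr 2 <;>
    · rw [fromBlocks_transpose, hv, fromBlocks_mulVec]
      simp [transpose_one, hUm]
  -- sum term nonneg
  have hsum : 0 ≤ v ⬝ᵥ (∑ j, αs j • (fromBlocks (E j) 0 0 (Usel TT j) * Φs j *
      (fromBlocks (E j) 0 0 (Usel TT j))ᵀ)) *ᵥ v := by
    rw [sum_mulVec', dot_sum']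
    refine Finset.sum_nonneg fun j _ => ?_
    rw [smul_mulVec, dotProduct_smul, smul_eq_mul]
    refine mul_nonneg (hαs j) ?_
    rw [quadl]
    have hDj : (fromBlocks (E j) 0 0 (Usel TT j))ᵀ *ᵥ v =
        Sum.elim ((E j)ᵀ *ᵥ ξ) ((Δs j)ᵀ *ᵥ ((E j)ᵀ *ᵥ ξ)) := by
      rw [fromBlocks_transpose, hv, fromBlocks_mulVec]
      simp [hsel j]
    rw [hDj]
    have hz := Matrix.PosSemidef.dotProduct_mulVec_nonneg (hΔ j) ((E j)ᵀ *ᵥ ξ)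
    rw [star_trivial, quadr, fromRows_mulVec, one_mulVec] at hz
    exact hz
  linarith [hbig ▸ (by linarith [h1, hsum] :
    (0:ℝ) ≤ v ⬝ᵥ (fromBlocks (1 : Matrix (SRows n m) (SRows n m) ℝ) 0 0 (Umat TT F) * Φ *
      (fromBlocks (1 : Matrix (SRows n m) (SRows n m) ℝ) 0 0 (Umat TT F))ᵀ) *ᵥ v)]
lemma dot_tr {p q : Type*} [Fintype p] [Fintype q] (M : Matrix p q ℝ) (a : p → ℝ) (b : q → ℝ) :
    a ⬝ᵥ M *ᵥ b = b ⬝ᵥ Mᵀ *ᵥ a := by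
  rw [dotProduct_mulVec, ← mulVec_transpose, dotProduct_comm]

theorem stmt18 {n m T J : ℕ} (hn : 0 < n) (hm : 0 < m) (hT : 0 < T) (hJ : 0 < J)
    (nn TT : Fin J → ℕ)
    (E : (j : Fin J) → Matrix (SRows n m) (Fin (nn j)) ℝ)
    (F : (j : Fin J) → Matrix (Fin (TT j)) (Fin T) ℝ)
    (Φs : (j : Fin J) → Matrix (Fin (nn j) ⊕ Fin (TT j)) (Fin (nn j) ⊕ Fin (TT j)) ℝ)
    (hΦs : ∀ j, Φs j ∈ PiSet (Fin (nn j)) (Fin (TT j)))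
    (Xp X : Matrix (Fin n) (Fin T) ℝ) (U : Matrix (Fin m) (Fin T) ℝ)
    (hdata : ∃ (Astar : Matrix (Fin n) (Fin n) ℝ) (Bstar : Matrix (Fin n) (Fin m) ℝ),
      ∃ Δ ∈ DstrSetR nn TT E F Φs,
        sysRow Astar Bstar * bigX Xp X U = sysRow Astar Bstar * Δ)
    (Φ : Matrix (SRows n m ⊕ Fin T) (SRows n m ⊕ Fin T) ℝ) (hΦsym : Φ.IsSymm)
    (αs : Fin J → ℝ) (hαs : ∀ j, 0 ≤ αs j)
    (P : Matrix (Fin n) (Fin n) ℝ) (hP : P.PosDef)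
    (Lm : Matrix (Fin m) (Fin n) ℝ) (β : ℝ) (hβ : 0 < β)
    (hc1 : Cond1 nn TT E F Φs Φ αs)
    (hc2 : (Mcal P Lm β - dN (NPhi (bigX Xp X U) Φ)).PosSemidef) :
    (∀ AB ∈ SigmaStr nn TT E F Φs Xp X U,
      (P - (AB.1 + AB.2 * (Lm * P⁻¹)) * P * (AB.1 + AB.2 * (Lm * P⁻¹))ᵀ).PosDef) ∧
    (∃ (P' : Matrix (Fin n) (Fin n) ℝ) (K' : Matrix (Fin m) (Fin n) ℝ), P'.PosDef ∧
      ∀ AB ∈ SigmaStr nn TT E F Φs Xp X U,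
        (P' - (AB.1 + AB.2 * K') * P' * (AB.1 + AB.2 * K')ᵀ).PosDef) := by
  classical
  have hPsymm : Pᵀ = P := by
    have := hP.1
    simpa [Matrix.IsHermitian, conjTranspose_eq_transpose_of_trivial] using this
  have hdet : IsUnit P.det := isUnit_iff_ne_zero.2 hP.det_pos.ne'
  have hPinvT : (P⁻¹)ᵀ = P⁻¹ := by rw [transpose_nonsing_inv, hPsymm]
  have main : ∀ AB ∈ SigmaStr nn TT E F Φs Xp X U,
      (P - (AB.1 + AB.2 * (Lm * P⁻¹)) * P * (AB.1 + AB.2 * (Lm * P⁻¹))ᵀ).PosDef := by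
    rintro ⟨A, B⟩ ⟨Δ', ⟨Δs, hΔ, rfl⟩, hcons⟩
    set K : Matrix (Fin m) (Fin n) ℝ := Lm * P⁻¹ with hK
    set M : Matrix (Fin n) (Fin n) ℝ := A + B * K with hMdef
    refine Matrix.PosDef.of_dotProduct_mulVec_pos ?_ ?_
    · -- Hermitian part
      have h1 : (M * P * Mᴴ).IsHermitian := isHermitian_mul_mul_conjTranspose M hP.1
      rw [conjTranspose_eq_transpose_of_trivial] at h1
      exact hP.1.sub h1
    · intro v hv
      rw [star_trivial]
      set y : Fin n → ℝ := Aᵀ *ᵥ v with hy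
      set u : Fin m → ℝ := Bᵀ *ᵥ v with hu
      set z : Fin n → ℝ := -(P⁻¹ *ᵥ (Lmᵀ *ᵥ u)) with hz
      set ξ : SRows n m → ℝ := Sum.elim v (Sum.elim y u) with hξdef
      set ζ : (SRows n m ⊕ Fin n) → ℝ := Sum.elim ξ z with hζdef
      have hPz : P *ᵥ z = -(Lmᵀ *ᵥ u) := by
        rw [hz, mulVec_neg, mulVec_mulVec, Matrix.mul_nonsing_inv P hdet, one_mulVec]
      -- positivity of the N(Φ) quadratic form
      have hξG : (sysRow A B)ᵀ *ᵥ v = ξ := by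
        rw [sysRow, transpose_fromCols, transpose_fromCols, fromRows_mulVec,
          fromRows_mulVec, transpose_one, one_mulVec]
      have hX : (bigX Xp X U)ᵀ *ᵥ ξ = (∑ j, E j * Δs j * F j)ᵀ *ᵥ ξ := by
        rw [← hξG, mulVec_mulVec, ← transpose_mul, hcons, transpose_mul, ← mulVec_mulVec]
      have hN : 0 ≤ ξ ⬝ᵥ (NPhi (bigX Xp X U) Φ) *ᵥ ξ := by
        rw [NPhi, quadl, transpose_fromCols, fromRows_mulVec, transpose_one, one_mulVec, hX]
        exact step1 nn TT E F Φs Φ αs hαs hc1 Δs hΔ ξ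
      have hdN : ζ ⬝ᵥ (dN (NPhi (bigX Xp X U) Φ)) *ᵥ ζ = ξ ⬝ᵥ (NPhi (bigX Xp X U) Φ) *ᵥ ξ := by
        rw [dN, hζdef, fromBlocks_mulVec]
        simp
      have hc2' := hc2.dotProduct_mulVec_nonneg ζ
      rw [star_trivial, sub_mulVec, dotProduct_sub, hdN] at hc2'
      have hMq : 0 ≤ ζ ⬝ᵥ (Mcal P Lm β) *ᵥ ζ := by linarith
      -- expand the Mcal quadratic form
      have expand1 : ζ ⬝ᵥ (Mcal P Lm β) *ᵥ ζ =
          v ⬝ᵥ P *ᵥ v - β * (v ⬝ᵥ v) - y ⬝ᵥ P *ᵥ y - y ⬝ᵥ (Lmᵀ *ᵥ u) - u ⬝ᵥ (Lm *ᵥ y)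
            + u ⬝ᵥ (Lm *ᵥ z) + z ⬝ᵥ (Lmᵀ *ᵥ u) + z ⬝ᵥ P *ᵥ z := by
        simp only [Mcal, hζdef, hξdef, fromBlocks_mulVec, fromRows_mulVec,
          fromCols_mulVec_sumElim, sumElim_dotProduct_sumElim, zero_mulVec, add_zero,
          zero_add, neg_mulVec, sub_mulVec, smul_mulVec, one_mulVec, dotProduct_add,
          dotProduct_sub, dotProduct_neg, dotProduct_smul, smul_eq_mul, dotProduct_zero,
          Sum.elim_add_add, Sum.elim_comp_inl, Sum.elim_comp_inr]
        ring
      have huy : u ⬝ᵥ (Lm *ᵥ y) = y ⬝ᵥ (Lmᵀ *ᵥ u) := dot_tr Lm u y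
      have huz : u ⬝ᵥ (Lm *ᵥ z) = z ⬝ᵥ (Lmᵀ *ᵥ u) := dot_tr Lm u z
      have hzz : z ⬝ᵥ P *ᵥ z = -(z ⬝ᵥ (Lmᵀ *ᵥ u)) := by rw [hPz, dotProduct_neg]
      -- expand the target quadratic form
      have hMT : Mᵀ *ᵥ v = y - z := by
        rw [hMdef, transpose_add, add_mulVec, transpose_mul, hK, transpose_mul, hPinvT,
          ← mulVec_mulVec, ← mulVec_mulVec, ← hu, ← hy, hz, sub_neg_eq_add]
      have hyPz : y ⬝ᵥ P *ᵥ z = -(y ⬝ᵥ (Lmᵀ *ᵥ u)) := by rw [hPz, dotProduct_neg]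
      have hzPy : z ⬝ᵥ P *ᵥ y = y ⬝ᵥ P *ᵥ z := dot_symm P hPsymm z y
      have expand2 : v ⬝ᵥ (P - M * P * Mᵀ) *ᵥ v =
          v ⬝ᵥ P *ᵥ v - (y - z) ⬝ᵥ P *ᵥ (y - z) := by
        rw [sub_mulVec, dotProduct_sub, quadl, hMT]
      have expand3 : (y - z) ⬝ᵥ P *ᵥ (y - z) =
          y ⬝ᵥ P *ᵥ y - y ⬝ᵥ P *ᵥ z - z ⬝ᵥ P *ᵥ y + z ⬝ᵥ P *ᵥ z := by
        rw [mulVec_sub, sub_dotProduct, dotProduct_sub, dotProduct_sub]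
        ring
      have hvv : 0 < v ⬝ᵥ v := by
        have h0 : v ⬝ᵥ v ≠ 0 := fun h => hv (dotProduct_self_eq_zero.mp h)
        have h1 : 0 ≤ v ⬝ᵥ v := Finset.sum_nonneg fun i _ => mul_self_nonneg _
        exact lt_of_le_of_ne h1 (Ne.symm h0)
      rw [expand2, expand3]
      rw [expand1] at hMq
      have hbv : 0 < β * (v ⬝ᵥ v) := mul_pos hβ hvv
      linarith
  refine ⟨main, P, Lm * P⁻¹, hP, main⟩

end
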